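/- Let k be a real number with |k| > 2(ρ,θ) (equivalently, |k| > 2(h^∨ − 1)). Then for all distinct w, w' ∈ W one has w(ρ) − w'(ρ) ∉ kΓ; that is, the points w·0 = w(ρ) − ρ for w ∈ W remain pairwise distinct modulo the lattice kΓ. -/

import Mathlib

open RealInnerProductSpace

noncomputable section

namespace S9

variable {E : Type} [NormedAddCommGroup E] [InnerProductSpace ℝ E] [FiniteDimensional ℝ E]

/-- A reduced irreducible crystallographic root system spanning a finite-dimensional real
inner product space `E`, together with a fixed system of positive roots and the highest
root `θ`, normalized so that `⟪θ, θ⟫ = 2`. -/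
structure RootSystemData (E : Type) [NormedAddCommGroup E] [InnerProductSpace ℝ E]
    [FiniteDimensional ℝ E] where
  /-- The finite set of roots. -/
  Φ : Finset E
  zero_not_mem : (0 : E) ∉ Φ
  span_eq_top : Submodule.span ℝ (Φ : Set E) = ⊤
  neg_mem : ∀ α ∈ Φ, -α ∈ Φ
  /-- The root system is reduced. -/
  reduced : ∀ α ∈ Φ, ∀ c : ℝ, c • α ∈ Φ → c = 1 ∨ c = -1
  /-- The reflection in a root maps roots to roots. -/
  reflection_mem : ∀ α ∈ Φ, ∀ β ∈ Φ, β - (2 * ⟪α, β⟫ / ⟪α, α⟫) • α ∈ Φ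
  /-- The root system is crystallographic: `⟪α^∨, β⟫ ∈ ℤ`. -/
  crystallographic : ∀ α ∈ Φ, ∀ β ∈ Φ, ∃ n : ℤ, 2 * ⟪α, β⟫ / ⟪α, α⟫ = (n : ℝ)
  /-- The root system is irreducible. -/
  irreducible : ∀ S : Finset E, S ⊆ Φ →
    (∀ α ∈ S, ∀ β ∈ Φ, β ∉ S → ⟪α, β⟫ = 0) → S = ∅ ∨ S = Φ
  /-- The fixed system of positive roots. -/
  pos : Finset E
  pos_subset : pos ⊆ Φ
  /-- The positive roots are cut out by a linear functional not vanishing on any root. -/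
  exists_functional : ∃ f : E →ₗ[ℝ] ℝ,
    (∀ α ∈ Φ, f α ≠ 0) ∧ ∀ α ∈ Φ, (α ∈ pos ↔ 0 < f α)
  /-- The highest root. -/
  θ : E
  θ_mem_pos : θ ∈ pos
  /-- `θ` is the highest root: no positive root can be added to it. -/
  θ_highest : ∀ α ∈ pos, θ + α ∉ Φ
  /-- Normalization of the inner product: `⟪θ, θ⟫ = 2`. -/
  θ_norm : ⟪θ, θ⟫ = 2

/-- The half-sum of the positive roots. -/
def RootSystemData.ρ (S : RootSystemData E) : E := (2⁻¹ : ℝ) • ∑ α ∈ S.pos, α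

/-- The dual Coxeter number `h^∨ = 1 + ⟪ρ, θ⟫`. -/
def RootSystemData.hdual (S : RootSystemData E) : ℝ := 1 + ⟪S.ρ, S.θ⟫

/-- The Weyl group: the subgroup of `GL(E)` generated by the reflections in the roots. -/
def RootSystemData.W (S : RootSystemData E) : Subgroup (E ≃ₗ[ℝ] E) :=
  Subgroup.closure {w | ∃ α ∈ S.Φ, ∀ x : E, w x = x - (2 * ⟪α, x⟫ / ⟪α, α⟫) • α}

/-- The coweight lattice `Γ = {λ ∈ E : ⟪α, λ⟫ ∈ ℤ for all α ∈ Φ}` (identified with a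
lattice in `E` via the inner product). -/
def RootSystemData.coweights (S : RootSystemData E) : Set E :=
  {l | ∀ α ∈ S.Φ, ∃ n : ℤ, ⟪α, l⟫ = (n : ℝ)}


/-!
If `w ρ - w' ρ = k • l` with `l ∈ Γ` nonzero, pair with a root `α` such that `⟪α, l⟫` is a
nonzero integer: then `|k| ≤ |⟪α, w ρ⟫| + |⟪α, w' ρ⟫| ≤ 2 ⟪ρ, θ⟫`, since `W` permutes the roots
and `|⟪ρ, β⟫| ≤ ⟪ρ, θ⟫` for every root `β`. The latter holds because a positive root maximising
`⟪ρ, ·⟫` is highest, and two highest roots coincide: by irreducibility, a dominant positive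
root has all its coefficients on the simple roots nonzero, so two of them are not orthogonal.

If `l = 0`, then `w'⁻¹ * w` fixes `ρ`, which is regular, so it preserves the positive roots; the
deletion argument applied to a shortest word in the simple reflections shows it is the identity.
-/

section Reflection

variable {F : Type*} [NormedAddCommGroup F] [InnerProductSpace ℝ F]

theorem involutive_reflectFormula (α : F) :
    Function.Involutive fun x : F => x - (2 * ⟪α, x⟫ / ⟪α, α⟫) • α := fun x => by
  rcases eq_or_ne α 0 with rfl | hα
  · simp
  · have : ⟪α, α⟫ ≠ 0 := inner_self_ne_zero.2 hα
    simp only [inner_sub_right, real_inner_smul_right]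
    rw [show 2 * (⟪α, x⟫ - 2 * ⟪α, x⟫ / ⟪α, α⟫ * ⟪α, α⟫) / ⟪α, α⟫ = -(2 * ⟪α, x⟫ / ⟪α, α⟫) by
      field_simp; ring]
    module

def reflect (α : F) : F ≃ₗ[ℝ] F :=
  LinearEquiv.ofInvolutive
    { toFun := fun x => x - (2 * ⟪α, x⟫ / ⟪α, α⟫) • α
      map_add' := fun x y => by simp only [inner_add_right, mul_add, add_div, add_smul]; abel
      map_smul' := fun c x => by
        simp only [inner_smul_right, RingHom.id_apply, smul_sub, smul_smul]
        ring_nf }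
    (involutive_reflectFormula α)

theorem reflect_apply (α x : F) : reflect α x = x - (2 * ⟪α, x⟫ / ⟪α, α⟫) • α := rfl

theorem reflect_reflect (α x : F) : reflect α (reflect α x) = x :=
  involutive_reflectFormula α x

theorem reflect_mul_self (α : F) : reflect α * reflect α = 1 :=
  LinearEquiv.ext (reflect_reflect α)

theorem reflect_inv (α : F) : (reflect α)⁻¹ = reflect α :=
  inv_eq_of_mul_eq_one_left (reflect_mul_self α)

theorem reflect_neg (α : F) : reflect (-α) = reflect α := by
  ext x
  simp only [reflect_apply, inner_neg_left, inner_neg_right, neg_neg]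
  module

theorem reflect_self {α : F} (hα : α ≠ 0) : reflect α α = -α := by
  rw [reflect_apply, mul_div_assoc, div_self (inner_self_ne_zero.2 hα)]
  module

theorem inner_reflect_reflect (α x y : F) : ⟪reflect α x, reflect α y⟫ = ⟪x, y⟫ := by
  rcases eq_or_ne α 0 with rfl | hα
  · simp [reflect_apply]
  · have : ⟪α, α⟫ ≠ 0 := inner_self_ne_zero.2 hα
    simp only [reflect_apply, inner_sub_left, inner_sub_right, real_inner_smul_left,
      real_inner_smul_right, real_inner_comm x α, real_inner_comm y α]
    field_simp
    ring

theorem reflect_eq_self {α x : F} (h : ⟪α, x⟫ = 0) : reflect α x = x := by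
  simp [reflect_apply, h]

theorem reflect_apply_mem_iff {α : F} {P : F → Prop} (h : ∀ x, P x → P (reflect α x)) (x : F) :
    P (reflect α x) ↔ P x :=
  ⟨fun hx => reflect_reflect α x ▸ h _ hx, h x⟩

theorem reflect_conj {u : F ≃ₗ[ℝ] F} (hu : ∀ x y, ⟪u x, u y⟫ = ⟪x, y⟫) (β : F) :
    reflect (u β) = u * reflect β * u⁻¹ := by
  ext x
  have hx : x = u (u⁻¹ x) := (u.apply_symm_apply x).symm
  conv_lhs => rw [hx, reflect_apply, hu, hu, ← map_smul, ← map_sub]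
  rfl

theorem apply_mem_iff_of_mem_closure {T : Set (F ≃ₗ[ℝ] F)} {s : Set F}
    (hT : ∀ g ∈ T, ∀ x, g x ∈ s ↔ x ∈ s) {u : F ≃ₗ[ℝ] F} (hu : u ∈ Subgroup.closure T)
    (x : F) : u x ∈ s ↔ x ∈ s := by
  induction hu using Subgroup.closure_induction generalizing x with
  | mem g hg => exact hT g hg x
  | one => rfl
  | mul g h _ _ ihg ihh => exact (ihg (h x)).trans (ihh x)
  | inv g _ ih => simpa using (ih (g⁻¹ x)).symm

theorem inner_apply_apply_of_mem_closure {T : Set (F ≃ₗ[ℝ] F)}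
    (hT : ∀ g ∈ T, ∀ x y, ⟪g x, g y⟫ = ⟪x, y⟫) {u : F ≃ₗ[ℝ] F} (hu : u ∈ Subgroup.closure T)
    (x y : F) : ⟪u x, u y⟫ = ⟪x, y⟫ := by
  induction hu using Subgroup.closure_induction generalizing x y with
  | mem g hg => exact hT g hg x y
  | one => rfl
  | mul g h _ _ ihg ihh => exact (ihg (h x) (h y)).trans (ihh x y)
  | inv g _ ih => simpa using (ih (g⁻¹ x) (g⁻¹ y)).symm

end Reflection

namespace RootSystemData

variable (S : RootSystemData E)

def posFunctional : E →ₗ[ℝ] ℝ := S.exists_functional.choose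

theorem mem_pos_iff {α : E} (hα : α ∈ S.Φ) : α ∈ S.pos ↔ 0 < S.posFunctional α :=
  S.exists_functional.choose_spec.2 α hα

theorem posFunctional_pos {α : E} (hα : α ∈ S.pos) : 0 < S.posFunctional α :=
  (S.mem_pos_iff (S.pos_subset hα)).1 hα

theorem neg_mem_pos_iff {α : E} (hα : α ∈ S.Φ) : -α ∈ S.pos ↔ α ∉ S.pos := by
  rw [S.mem_pos_iff (S.neg_mem α hα), S.mem_pos_iff hα, map_neg, neg_pos, not_lt]
  exact ⟨le_of_lt, fun h => lt_of_le_of_ne h (S.exists_functional.choose_spec.1 α hα)⟩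

theorem ne_zero_of_mem {α : E} (hα : α ∈ S.Φ) : α ≠ 0 := fun h => S.zero_not_mem (h ▸ hα)

theorem inner_self_pos_of_mem {α : E} (hα : α ∈ S.Φ) : 0 < ⟪α, α⟫ :=
  real_inner_self_pos.2 (S.ne_zero_of_mem hα)

theorem add_mem_pos {α β : E} (hα : α ∈ S.pos) (hβ : β ∈ S.pos) (h : α + β ∈ S.Φ) :
    α + β ∈ S.pos := by
  rw [S.mem_pos_iff h, map_add]
  linarith [S.posFunctional_pos hα, S.posFunctional_pos hβ]

theorem sub_mem_of_inner_pos {α β : E} (hα : α ∈ S.Φ) (hβ : β ∈ S.Φ) (hne : α ≠ β)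
    (h : 0 < ⟪α, β⟫) : α - β ∈ S.Φ := by
  have ha := S.inner_self_pos_of_mem hα
  have hb := S.inner_self_pos_of_mem hβ
  obtain ⟨n, hn⟩ := S.crystallographic α hα β hβ
  obtain ⟨m, hm⟩ := S.crystallographic β hβ α hα
  rw [real_inner_comm] at hm
  rcases eq_or_ne n 1 with rfl | hn1
  · have := S.neg_mem _ (S.reflection_mem α hα β hβ)
    rwa [hn, Int.cast_one, one_smul, neg_sub] at this
  rcases eq_or_ne m 1 with rfl | hm1
  · have := S.reflection_mem β hβ α hα
    rwa [real_inner_comm, hm, Int.cast_one, one_smul] at this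
  -- both Cartan integers are at least `2`, which forces `‖α - β‖² ≤ 0`
  have hn2 : (2 : ℝ) ≤ n := by
    have : (0 : ℝ) < n := hn ▸ div_pos (by linarith) ha
    exact_mod_cast (show 2 ≤ n by have := Int.cast_pos.1 this; omega)
  have hm2 : (2 : ℝ) ≤ m := by
    have : (0 : ℝ) < m := hm ▸ div_pos (by linarith) hb
    exact_mod_cast (show 2 ≤ m by have := Int.cast_pos.1 this; omega)
  rw [div_eq_iff ha.ne'] at hn
  rw [div_eq_iff hb.ne'] at hm
  refine absurd (sub_eq_zero.1 (real_inner_self_nonpos.1 ?_)) hne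
  rw [inner_sub_left, inner_sub_right, inner_sub_right, real_inner_comm α β]
  nlinarith [mul_le_mul_of_nonneg_right hn2 ha.le, mul_le_mul_of_nonneg_right hm2 hb.le]

theorem reflect_mem_W {α : E} (hα : α ∈ S.Φ) : reflect α ∈ S.W :=
  Subgroup.subset_closure ⟨α, hα, fun _ => rfl⟩

theorem inner_apply_apply_of_mem_W {w : E ≃ₗ[ℝ] E} (hw : w ∈ S.W) (x y : E) :
    ⟪w x, w y⟫ = ⟪x, y⟫ :=
  inner_apply_apply_of_mem_closure
    (by rintro g ⟨α, -, hg⟩ x y; rw [hg, hg]; exact inner_reflect_reflect α x y) hw x y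

theorem apply_mem_Φ_iff {w : E ≃ₗ[ℝ] E} (hw : w ∈ S.W) (x : E) : w x ∈ S.Φ ↔ x ∈ S.Φ :=
  apply_mem_iff_of_mem_closure (s := S.Φ) (by
    rintro g ⟨α, hα, hg⟩
    obtain rfl : g = reflect α := LinearEquiv.ext hg
    exact reflect_apply_mem_iff fun β hβ => S.reflection_mem α hα β hβ) hw x

@[elab_as_elim]
theorem pos_induction {P : E → Prop}
    (h : ∀ β ∈ S.pos, (∀ γ ∈ S.pos, S.posFunctional γ < S.posFunctional β → P γ) → P β)
    {β : E} (hβ : β ∈ S.pos) : P β :=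
  (Set.wellFoundedOn_image.1 (S.pos.finite_toSet.image S.posFunctional).wellFoundedOn).induction
    hβ h

open scoped Classical in
def simpleRoots : Finset E := S.pos.filter fun α => ∀ β ∈ S.pos, ∀ γ ∈ S.pos, α ≠ β + γ

theorem mem_simpleRoots {α : E} :
    α ∈ S.simpleRoots ↔ α ∈ S.pos ∧ ∀ β ∈ S.pos, ∀ γ ∈ S.pos, α ≠ β + γ := by
  classical exact Finset.mem_filter

theorem simpleRoots_subset : S.simpleRoots ⊆ S.pos := fun _ hα => (S.mem_simpleRoots.1 hα).1

theorem mem_Φ_of_mem_simpleRoots {α : E} (hα : α ∈ S.simpleRoots) : α ∈ S.Φ :=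
  S.pos_subset (S.simpleRoots_subset hα)

theorem inner_nonpos_of_mem_simpleRoots {α β : E} (hα : α ∈ S.simpleRoots)
    (hβ : β ∈ S.simpleRoots) (hne : α ≠ β) : ⟪α, β⟫ ≤ 0 := by
  by_contra! h
  have hsub := S.sub_mem_of_inner_pos (S.mem_Φ_of_mem_simpleRoots hα)
    (S.mem_Φ_of_mem_simpleRoots hβ) hne h
  by_cases hp : α - β ∈ S.pos
  · exact (S.mem_simpleRoots.1 hα).2 _ hp β (S.simpleRoots_subset hβ) (sub_add_cancel α β).symm
  · rw [← S.neg_mem_pos_iff hsub, neg_sub] at hp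
    exact (S.mem_simpleRoots.1 hβ).2 _ hp α (S.simpleRoots_subset hα) (sub_add_cancel β α).symm

theorem exists_nat_coeffs {β : E} (hβ : β ∈ S.pos) :
    ∃ c : E → ℕ, β = ∑ γ ∈ S.simpleRoots, (c γ : ℝ) • γ := by
  classical
  refine S.pos_induction (fun β hβ ih => ?_) hβ
  by_cases hs : β ∈ S.simpleRoots
  · exact ⟨fun γ => if γ = β then 1 else 0, by simp [hs]⟩
  obtain ⟨γ, hγ, δ, hδ, rfl⟩ : ∃ γ ∈ S.pos, ∃ δ ∈ S.pos, β = γ + δ := by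
    simpa [S.mem_simpleRoots, hβ] using hs
  have hγ' := S.posFunctional_pos hγ
  have hδ' := S.posFunctional_pos hδ
  obtain ⟨c, hc⟩ := ih γ hγ (by rw [map_add]; linarith)
  obtain ⟨d, hd⟩ := ih δ hδ (by rw [map_add]; linarith)
  exact ⟨c + d, by simp [hc, hd, add_smul, Finset.sum_add_distrib]⟩

theorem exists_simpleRoot_inner_pos {β : E} (hβ : β ∈ S.pos) :
    ∃ α ∈ S.simpleRoots, 0 < ⟪α, β⟫ := by
  obtain ⟨c, hc⟩ := S.exists_nat_coeffs hβ
  by_contra! h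
  have : ⟪∑ γ ∈ S.simpleRoots, (c γ : ℝ) • γ, β⟫ ≤ 0 := by
    rw [sum_inner]
    exact Finset.sum_nonpos fun γ hγ => by
      rw [real_inner_smul_left]; exact mul_nonpos_of_nonneg_of_nonpos (Nat.cast_nonneg _) (h γ hγ)
  rw [← hc] at this
  linarith [S.inner_self_pos_of_mem (S.pos_subset hβ)]

theorem reflect_mem_pos {α β : E} (hα : α ∈ S.simpleRoots) (hβ : β ∈ S.pos) (hne : β ≠ α) :
    reflect α β ∈ S.pos := by
  refine S.pos_induction (P := fun β => β ≠ α → reflect α β ∈ S.pos) (fun β hβ ih hne => ?_) hβ hne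
  have hαpos := S.simpleRoots_subset hα
  have hαΦ := S.pos_subset hαpos
  have hβΦ := S.pos_subset hβ
  have hmem : reflect α β ∈ S.Φ := S.reflection_mem α hαΦ β hβΦ
  have hfα := S.posFunctional_pos hαpos
  have hsimple := (S.mem_simpleRoots.1 hα).2
  rcases le_or_gt ⟪α, β⟫ 0 with hle | hlt
  · rw [S.mem_pos_iff hmem, reflect_apply, map_sub, map_smul, smul_eq_mul]
    have : 2 * ⟪α, β⟫ / ⟪α, α⟫ ≤ 0 :=
      div_nonpos_of_nonpos_of_nonneg (by linarith) (S.inner_self_pos_of_mem hαΦ).le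
    nlinarith [S.posFunctional_pos hβ]
  -- otherwise `β - α` is positive, so by induction `s_α β + α = s_α (β - α)` is positive, and a
  -- negative `s_α β` would split the simple root `α` as a sum of two positive roots
  have hsub : β - α ∈ S.Φ := S.sub_mem_of_inner_pos hβΦ hαΦ hne (real_inner_comm α β ▸ hlt)
  have hsubpos : β - α ∈ S.pos := by
    by_contra h
    rw [← S.neg_mem_pos_iff hsub, neg_sub] at h
    exact hsimple _ h β hβ (sub_add_cancel α β).symm
  have hsubne : β - α ≠ α := fun h => by
    have := S.reduced α hαΦ 2 (by rw [two_smul, ← sub_eq_iff_eq_add.1 h]; exact hβΦ)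
    norm_num at this
  have ih' := ih (β - α) hsubpos (by rw [map_sub]; linarith) hsubne
  rw [map_sub, reflect_self (S.ne_zero_of_mem hαΦ), sub_neg_eq_add] at ih'
  by_contra h
  exact hsimple _ ih' _ ((S.neg_mem_pos_iff hmem).2 h) (by abel)

theorem reflect_rho {α : E} (hα : α ∈ S.simpleRoots) : reflect α S.ρ = S.ρ - α := by
  classical
  have hαpos := S.simpleRoots_subset hα
  have hα0 := S.ne_zero_of_mem (S.pos_subset hαpos)
  have hmaps : ∀ β ∈ S.pos.erase α, reflect α β ∈ S.pos.erase α := by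
    intro β hβ
    obtain ⟨hne, hβ⟩ := Finset.mem_erase.1 hβ
    refine Finset.mem_erase.2 ⟨fun h => ?_, S.reflect_mem_pos hα hβ hne⟩
    rw [← reflect_reflect α β, h, reflect_self hα0] at hβ
    exact (S.neg_mem_pos_iff (S.pos_subset hαpos)).1 hβ hαpos
  have hperm : ∑ β ∈ S.pos.erase α, reflect α β = ∑ β ∈ S.pos.erase α, β :=
    Finset.sum_nbij' (reflect α) (reflect α) hmaps hmaps (fun β _ => reflect_reflect α β)
      (fun β _ => reflect_reflect α β) (fun _ _ => rfl)
  rw [ρ, map_smul, map_sum, ← Finset.add_sum_erase S.pos _ hαpos, reflect_self hα0, hperm,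
    ← Finset.add_sum_erase S.pos (fun β => β) hαpos]
  module

theorem inner_rho_pos_of_mem_simpleRoots {α : E} (hα : α ∈ S.simpleRoots) : 0 < ⟪S.ρ, α⟫ := by
  have hαΦ := S.mem_Φ_of_mem_simpleRoots hα
  have h := inner_reflect_reflect α α S.ρ
  rw [S.reflect_rho hα, reflect_self (S.ne_zero_of_mem hαΦ), inner_neg_left, inner_sub_right] at h
  rw [real_inner_comm]
  linarith [S.inner_self_pos_of_mem hαΦ]

theorem inner_rho_pos {β : E} (hβ : β ∈ S.pos) : 0 < ⟪S.ρ, β⟫ := by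
  refine S.pos_induction (fun β hβ ih => ?_) hβ
  by_cases hs : β ∈ S.simpleRoots
  · exact S.inner_rho_pos_of_mem_simpleRoots hs
  obtain ⟨γ, hγ, δ, hδ, rfl⟩ : ∃ γ ∈ S.pos, ∃ δ ∈ S.pos, β = γ + δ := by
    simpa [S.mem_simpleRoots, hβ] using hs
  have hγ' := S.posFunctional_pos hγ
  have hδ' := S.posFunctional_pos hδ
  rw [inner_add_right]
  exact add_pos (ih γ hγ (by rw [map_add]; linarith)) (ih δ hδ (by rw [map_add]; linarith))

theorem mem_pos_iff_inner_rho_pos {β : E} (hβ : β ∈ S.Φ) : β ∈ S.pos ↔ 0 < ⟪S.ρ, β⟫ := by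
  refine ⟨S.inner_rho_pos, fun h => ?_⟩
  by_contra hp
  have := S.inner_rho_pos ((S.neg_mem_pos_iff hβ).2 hp)
  rw [inner_neg_right] at this
  linarith

theorem apply_mem_pos_of_apply_rho_eq {u : E ≃ₗ[ℝ] E} (hu : u ∈ S.W) (hρ : u S.ρ = S.ρ)
    {β : E} (hβ : β ∈ S.pos) : u β ∈ S.pos := by
  rw [S.mem_pos_iff_inner_rho_pos ((S.apply_mem_Φ_iff hu β).2 (S.pos_subset hβ)), ← hρ,
    S.inner_apply_apply_of_mem_W hu]
  exact S.inner_rho_pos hβ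

def simpleReflections : Set (E ≃ₗ[ℝ] E) := reflect '' S.simpleRoots

theorem closure_simpleReflections_le_W : Subgroup.closure S.simpleReflections ≤ S.W :=
  (Subgroup.closure_le _).2 fun _ ⟨_, hα, hg⟩ =>
    hg ▸ S.reflect_mem_W (S.mem_Φ_of_mem_simpleRoots hα)

theorem exists_apply_mem_simpleRoots {β : E} (hβ : β ∈ S.pos) :
    ∃ u ∈ Subgroup.closure S.simpleReflections, u β ∈ S.simpleRoots := by
  refine S.pos_induction (fun β hβ ih => ?_) hβ
  by_cases hs : β ∈ S.simpleRoots
  · exact ⟨1, one_mem _, hs⟩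
  obtain ⟨α, hα, hαβ⟩ := S.exists_simpleRoot_inner_pos hβ
  have hne : β ≠ α := by rintro rfl; exact hs hα
  have hdecr : S.posFunctional (reflect α β) < S.posFunctional β := by
    have hc : 0 < 2 * ⟪α, β⟫ / ⟪α, α⟫ :=
      div_pos (by linarith) (S.inner_self_pos_of_mem (S.mem_Φ_of_mem_simpleRoots hα))
    rw [reflect_apply, map_sub, map_smul, smul_eq_mul]
    exact sub_lt_self _ (mul_pos hc (S.posFunctional_pos (S.simpleRoots_subset hα)))
  obtain ⟨u, hu, huβ⟩ := ih _ (S.reflect_mem_pos hα hβ hne) hdecr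
  exact ⟨u * reflect α, mul_mem hu (Subgroup.subset_closure ⟨α, hα, rfl⟩), huβ⟩

theorem W_le_closure_simpleReflections : S.W ≤ Subgroup.closure S.simpleReflections := by
  refine (Subgroup.closure_le _).2 fun w ⟨γ, hγ, hw⟩ => ?_
  obtain rfl : w = reflect γ := LinearEquiv.ext hw
  suffices h : ∀ β ∈ S.pos, reflect β ∈ Subgroup.closure S.simpleReflections by
    by_cases hp : γ ∈ S.pos
    · exact h γ hp
    · rw [← reflect_neg]
      exact h _ ((S.neg_mem_pos_iff hγ).2 hp)
  intro β hβ
  obtain ⟨u, hu, huβ⟩ := S.exists_apply_mem_simpleRoots hβ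
  have hconj : reflect β = u⁻¹ * reflect (u β) * u := by
    rw [reflect_conj (S.inner_apply_apply_of_mem_W (S.closure_simpleReflections_le_W hu))]
    group
  rw [hconj]
  exact mul_mem (mul_mem (inv_mem hu) (Subgroup.subset_closure ⟨_, huβ, rfl⟩)) hu

theorem exists_list_simpleReflections {u : E ≃ₗ[ℝ] E}
    (hu : u ∈ Subgroup.closure S.simpleReflections) :
    ∃ L : List (E ≃ₗ[ℝ] E), (∀ g ∈ L, g ∈ S.simpleReflections) ∧ L.prod = u := by
  induction hu using Subgroup.closure_induction_left with
  | one => exact ⟨[], by simp, rfl⟩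
  | mul_left g hg u _ ih =>
    obtain ⟨L, hL, rfl⟩ := ih
    exact ⟨g :: L, List.forall_mem_cons.2 ⟨hg, hL⟩, List.prod_cons⟩
  | inv_mul_cancel g hg u _ ih =>
    obtain ⟨L, hL, rfl⟩ := ih
    obtain ⟨α, hα, rfl⟩ := hg
    exact ⟨reflect α :: L, List.forall_mem_cons.2 ⟨⟨α, hα, rfl⟩, hL⟩,
      by rw [reflect_inv, List.prod_cons]⟩

theorem list_prod_mem_W {L : List (E ≃ₗ[ℝ] E)} (hL : ∀ g ∈ L, g ∈ S.simpleReflections) :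
    L.prod ∈ S.W :=
  S.closure_simpleReflections_le_W
    (Subgroup.list_prod_mem _ fun g hg => Subgroup.subset_closure (hL g hg))

/-- The deletion condition. -/
theorem exists_shorter_list_of_apply_not_mem_pos :
    ∀ (L : List (E ≃ₗ[ℝ] E)), (∀ g ∈ L, g ∈ S.simpleReflections) → ∀ {β : E}, β ∈ S.pos →
      L.prod β ∉ S.pos → ∃ L' : List (E ≃ₗ[ℝ] E), (∀ g ∈ L', g ∈ S.simpleReflections) ∧
        L'.length < L.length ∧ L.prod = L'.prod * reflect β
  | [], _, _, hβ, h => absurd hβ h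
  | g :: L, hgL, β, hβ, h => by
    obtain ⟨hg, hL⟩ := List.forall_mem_cons.1 hgL
    by_cases hLβ : L.prod β ∈ S.pos
    · obtain ⟨α, hα, rfl⟩ := hg
      have hLβα : L.prod β = α := by
        by_contra hne
        exact h (by rw [List.prod_cons, LinearEquiv.mul_apply]; exact S.reflect_mem_pos hα hLβ hne)
      refine ⟨L, hL, by simp, ?_⟩
      rw [List.prod_cons, ← hLβα,
        reflect_conj (S.inner_apply_apply_of_mem_W (S.list_prod_mem_W hL))]
      group
    · obtain ⟨L', hL', hlen, heq⟩ := exists_shorter_list_of_apply_not_mem_pos L hL hβ hLβ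
      refine ⟨g :: L', List.forall_mem_cons.2 ⟨hg, hL'⟩, by simpa using hlen, ?_⟩
      rw [List.prod_cons, List.prod_cons, heq, mul_assoc]

theorem list_prod_eq_one_of_apply_mem_pos (L : List (E ≃ₗ[ℝ] E))
    (hL : ∀ g ∈ L, g ∈ S.simpleReflections) (hpos : ∀ β ∈ S.pos, L.prod β ∈ S.pos) :
    L.prod = 1 := by
  induction hn : L.length using Nat.strong_induction_on generalizing L with | _ n ih =>
  rcases L.eq_nil_or_concat' with rfl | ⟨M, g, rfl⟩
  · rfl
  have hM : ∀ h ∈ M, h ∈ S.simpleReflections := fun h hh => hL h (List.mem_append_left _ hh)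
  obtain ⟨α, hα, rfl⟩ : g ∈ S.simpleReflections := hL g (by simp)
  have hprod : (M ++ [reflect α]).prod = M.prod * reflect α := by simp
  have hαpos := S.simpleRoots_subset hα
  have hMα : M.prod α ∉ S.pos := by
    have := hpos α hαpos
    rw [hprod, LinearEquiv.mul_apply, reflect_self (S.ne_zero_of_mem (S.pos_subset hαpos)),
      map_neg] at this
    exact (S.neg_mem_pos_iff ((S.apply_mem_Φ_iff (S.list_prod_mem_W hM) α).2
      (S.pos_subset hαpos))).1 this
  obtain ⟨M', hM', hlen, hMeq⟩ := S.exists_shorter_list_of_apply_not_mem_pos M hM hαpos hMα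
  have hM'prod : (M ++ [reflect α]).prod = M'.prod := by
    rw [hprod, hMeq, mul_assoc, reflect_mul_self, mul_one]
  rw [hM'prod] at hpos ⊢
  exact ih _ (by rw [← hn, List.length_append, List.length_singleton]; omega) M' hM' hpos rfl

theorem eq_one_of_apply_rho_eq {u : E ≃ₗ[ℝ] E} (hu : u ∈ S.W) (hρ : u S.ρ = S.ρ) : u = 1 := by
  obtain ⟨L, hL, rfl⟩ := S.exists_list_simpleReflections (S.W_le_closure_simpleReflections hu)
  exact S.list_prod_eq_one_of_apply_mem_pos L hL fun β hβ =>
    S.apply_mem_pos_of_apply_rho_eq hu hρ hβ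

theorem apply_mem_iff_of_mem_closure_simpleReflections {V : Submodule ℝ E}
    (hV : ∀ γ ∈ S.simpleRoots, γ ∈ V ∨ γ ∈ Vᗮ) {u : E ≃ₗ[ℝ] E}
    (hu : u ∈ Subgroup.closure S.simpleReflections) (x : E) : u x ∈ V ↔ x ∈ V := by
  refine apply_mem_iff_of_mem_closure (s := V) ?_ hu x
  rintro _ ⟨γ, hγ, rfl⟩
  refine reflect_apply_mem_iff fun x hx => ?_
  rcases hV γ hγ with h | h
  · exact V.sub_mem hx (V.smul_mem _ h)
  · rwa [reflect_eq_self (Submodule.inner_left_of_mem_orthogonal hx h)]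

theorem mem_span_or_mem_span {A B : Set E} (hAB : ∀ γ ∈ S.simpleRoots, γ ∈ A ∨ γ ∈ B)
    (horth : ∀ a ∈ A, ∀ b ∈ B, ⟪a, b⟫ = 0) {β : E} (hβ : β ∈ S.Φ) :
    β ∈ Submodule.span ℝ A ∨ β ∈ Submodule.span ℝ B := by
  wlog hβpos : β ∈ S.pos generalizing β
  · simpa using this (S.neg_mem β hβ) ((S.neg_mem_pos_iff hβ).2 hβpos)
  have hAB' := Submodule.isOrtho_span.2 horth
  have hA : ∀ γ ∈ S.simpleRoots, γ ∈ Submodule.span ℝ A ∨ γ ∈ (Submodule.span ℝ A)ᗮ :=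
    fun γ hγ => (hAB γ hγ).imp (Submodule.subset_span ·)
      fun h => Submodule.isOrtho_iff_le.1 hAB'.symm (Submodule.subset_span h)
  have hB : ∀ γ ∈ S.simpleRoots, γ ∈ Submodule.span ℝ B ∨ γ ∈ (Submodule.span ℝ B)ᗮ :=
    fun γ hγ => (hAB γ hγ).symm.imp (Submodule.subset_span ·)
      fun h => Submodule.isOrtho_iff_le.1 hAB' (Submodule.subset_span h)
  -- the simple reflections stabilise both spans, and one of their products sends `β` into `A ∪ B`
  obtain ⟨u, hu, huβ⟩ := S.exists_apply_mem_simpleRoots hβpos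
  rw [← S.apply_mem_iff_of_mem_closure_simpleReflections hA hu,
    ← S.apply_mem_iff_of_mem_closure_simpleReflections hB hu]
  exact (hAB _ huβ).imp (Submodule.subset_span ·) (Submodule.subset_span ·)

theorem inner_eq_zero_of_coeff {β : E} {c : E → ℕ} (hc : β = ∑ γ ∈ S.simpleRoots, (c γ : ℝ) • γ)
    {a b : E} (ha : a ∈ S.simpleRoots) (hb : b ∈ S.simpleRoots) (hca : c a ≠ 0) (hcb : c b = 0)
    (hβb : 0 ≤ ⟪β, b⟫) : ⟪a, b⟫ = 0 := by
  have hterms : ∀ γ ∈ S.simpleRoots, (c γ : ℝ) * ⟪γ, b⟫ ≤ 0 := by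
    intro γ hγ
    rcases eq_or_ne γ b with rfl | hne
    · simp [hcb]
    · exact mul_nonpos_of_nonneg_of_nonpos (Nat.cast_nonneg _)
        (S.inner_nonpos_of_mem_simpleRoots hγ hb hne)
  have hsum : ⟪β, b⟫ = ∑ γ ∈ S.simpleRoots, (c γ : ℝ) * ⟪γ, b⟫ := by
    simp only [hc, sum_inner, real_inner_smul_left]
  have := (Finset.sum_eq_zero_iff_of_nonpos hterms).1
    (le_antisymm (Finset.sum_nonpos hterms) (hsum ▸ hβb)) a ha
  exact (mul_eq_zero.1 this).resolve_left (Nat.cast_ne_zero.2 hca)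

theorem coeff_ne_zero_of_dominant {β : E} (hβ : β ∈ S.Φ) {c : E → ℕ}
    (hc : β = ∑ γ ∈ S.simpleRoots, (c γ : ℝ) • γ) (hdom : ∀ α ∈ S.simpleRoots, 0 ≤ ⟪β, α⟫)
    {γ : E} (hγ : γ ∈ S.simpleRoots) : c γ ≠ 0 := by
  classical
  set A : Set E := {α | α ∈ S.simpleRoots ∧ c α ≠ 0}
  set B : Set E := {α | α ∈ S.simpleRoots ∧ c α = 0}
  have horth : ∀ a ∈ A, ∀ b ∈ B, ⟪a, b⟫ = 0 := fun a ha b hb =>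
    S.inner_eq_zero_of_coeff hc ha.1 hb.1 ha.2 hb.2 (hdom b hb.1)
  have hsplit : ∀ α ∈ S.Φ, α ∈ Submodule.span ℝ A ∨ α ∈ Submodule.span ℝ B :=
    fun α hα => S.mem_span_or_mem_span (A := A) (B := B)
      (fun α hα => (em (c α = 0)).symm.imp (⟨hα, ·⟩) (⟨hα, ·⟩)) horth hα
  have hβA : β ∈ Submodule.span ℝ A := by
    rw [hc]
    refine Submodule.sum_mem _ fun α hα => ?_
    rcases eq_or_ne (c α) 0 with h | h
    · simp [h]
    · exact Submodule.smul_mem _ _ (Submodule.subset_span ⟨hα, h⟩)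
  -- by irreducibility, the roots in `span A` are all the roots
  have hall : S.Φ.filter (· ∈ Submodule.span ℝ A) = S.Φ := by
    refine (S.irreducible _ (Finset.filter_subset _ _) fun α hα δ hδ hδA => ?_).resolve_left
      (Finset.ne_empty_of_mem (Finset.mem_filter.2 ⟨hβ, hβA⟩))
    have hδB := (hsplit δ hδ).resolve_left fun h => hδA (Finset.mem_filter.2 ⟨hδ, h⟩)
    exact (Submodule.isOrtho_span.2 horth).inner_eq (Finset.mem_filter.1 hα).2 hδB
  intro h0
  have hγΦ := S.mem_Φ_of_mem_simpleRoots hγ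
  have hγA : γ ∈ Submodule.span ℝ A := (Finset.mem_filter.1 (hall.symm ▸ hγΦ)).2
  have := (Submodule.isOrtho_span.2 horth).inner_eq hγA (Submodule.subset_span ⟨hγ, h0⟩)
  exact S.ne_zero_of_mem hγΦ (inner_self_eq_zero.1 this)

theorem inner_pos_of_dominant {β β' : E} (hβ : β ∈ S.pos) (hβ' : β' ∈ S.pos)
    (hdom : ∀ α ∈ S.simpleRoots, 0 ≤ ⟪β, α⟫) (hdom' : ∀ α ∈ S.simpleRoots, 0 ≤ ⟪β', α⟫) :
    0 < ⟪β, β'⟫ := by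
  obtain ⟨c, hc⟩ := S.exists_nat_coeffs hβ
  obtain ⟨α, hα, hαβ'⟩ := S.exists_simpleRoot_inner_pos hβ'
  have hcα := S.coeff_ne_zero_of_dominant (S.pos_subset hβ) hc hdom hα
  rw [hc, sum_inner]
  refine Finset.sum_pos' (fun γ hγ => ?_) ⟨α, hα, ?_⟩
  · rw [real_inner_smul_left, real_inner_comm]
    exact mul_nonneg (Nat.cast_nonneg _) (hdom' γ hγ)
  · rw [real_inner_smul_left]
    exact mul_pos (Nat.cast_pos.2 (Nat.pos_of_ne_zero hcα)) hαβ'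

def IsHighest (β : E) : Prop := β ∈ S.pos ∧ ∀ α ∈ S.pos, β + α ∉ S.Φ

theorem isHighest_θ : S.IsHighest S.θ := ⟨S.θ_mem_pos, S.θ_highest⟩

variable {S} in
theorem IsHighest.inner_nonneg {β : E} (h : S.IsHighest β) {α : E} (hα : α ∈ S.pos) :
    0 ≤ ⟪β, α⟫ := by
  by_contra! hlt
  have hαΦ := S.pos_subset hα
  have hne : β ≠ -α := by
    rintro rfl
    exact (S.neg_mem_pos_iff hαΦ).1 h.1 hα
  have := S.sub_mem_of_inner_pos (S.pos_subset h.1) (S.neg_mem α hαΦ) hne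
    (by rw [inner_neg_right]; linarith)
  exact h.2 α hα (by rwa [sub_neg_eq_add] at this)

variable {S} in
theorem IsHighest.eq {β β' : E} (h : S.IsHighest β) (h' : S.IsHighest β') : β = β' := by
  by_contra hne
  have hsub := S.sub_mem_of_inner_pos (S.pos_subset h.1) (S.pos_subset h'.1) hne
    (S.inner_pos_of_dominant h.1 h'.1 (fun α hα => h.inner_nonneg (S.simpleRoots_subset hα))
      fun α hα => h'.inner_nonneg (S.simpleRoots_subset hα))
  by_cases hp : β - β' ∈ S.pos
  · exact h'.2 _ hp (by rw [add_sub_cancel]; exact S.pos_subset h.1)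
  · rw [← S.neg_mem_pos_iff hsub, neg_sub] at hp
    exact h.2 _ hp (by rw [add_sub_cancel]; exact S.pos_subset h'.1)

theorem isHighest_of_forall_inner_rho_le {β : E} (hβ : β ∈ S.pos)
    (hmax : ∀ γ ∈ S.pos, ⟪S.ρ, γ⟫ ≤ ⟪S.ρ, β⟫) : S.IsHighest β := by
  refine ⟨hβ, fun α hα hadd => ?_⟩
  have := hmax _ (S.add_mem_pos hβ hα hadd)
  rw [inner_add_right] at this
  linarith [S.inner_rho_pos hα]

theorem inner_rho_le_inner_rho_θ {β : E} (hβ : β ∈ S.Φ) : ⟪S.ρ, β⟫ ≤ ⟪S.ρ, S.θ⟫ := by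
  obtain ⟨β₀, hβ₀, hmax⟩ := S.pos.exists_max_image (⟪S.ρ, ·⟫) ⟨S.θ, S.θ_mem_pos⟩
  rw [← (S.isHighest_of_forall_inner_rho_le hβ₀ hmax).eq S.isHighest_θ]
  by_cases hp : β ∈ S.pos
  · exact hmax β hp
  · linarith [(S.mem_pos_iff_inner_rho_pos hβ).not.1 hp, S.inner_rho_pos hβ₀]

theorem abs_inner_rho_le {β : E} (hβ : β ∈ S.Φ) : |⟪S.ρ, β⟫| ≤ ⟪S.ρ, S.θ⟫ := by
  have := S.inner_rho_le_inner_rho_θ (S.neg_mem β hβ)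
  rw [inner_neg_right] at this
  exact abs_le.2 ⟨by linarith, S.inner_rho_le_inner_rho_θ hβ⟩

theorem abs_inner_apply_rho_le {w : E ≃ₗ[ℝ] E} (hw : w ∈ S.W) {α : E} (hα : α ∈ S.Φ) :
    |⟪α, w S.ρ⟫| ≤ ⟪S.ρ, S.θ⟫ := by
  have hα' : w⁻¹ α ∈ S.Φ := (S.apply_mem_Φ_iff hw _).1 (by simpa using hα)
  have := S.inner_apply_apply_of_mem_W hw S.ρ (w⁻¹ α)
  rw [real_inner_comm, show w (w⁻¹ α) = α from w.apply_symm_apply α] at this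
  rw [this]
  exact S.abs_inner_rho_le hα'

theorem exists_mem_inner_ne_zero {l : E} (hl : l ≠ 0) : ∃ α ∈ S.Φ, ⟪α, l⟫ ≠ 0 := by
  by_contra! h
  have hle : Submodule.span ℝ (S.Φ : Set E) ≤ (ℝ ∙ l)ᗮ :=
    Submodule.span_le.2 fun α hα => Submodule.mem_orthogonal_singleton_iff_inner_left.2 (h α hα)
  rw [S.span_eq_top] at hle
  exact hl (inner_self_eq_zero.1
    (Submodule.mem_orthogonal_singleton_iff_inner_left.1 (hle Submodule.mem_top)))

end RootSystemData

/-- **Weyl orbit points of `ρ` stay distinct modulo `kΓ`** (Statement 9).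
If `|k| > 2⟪ρ, θ⟫` (equivalently `|k| > 2(h^∨ − 1)`), then for all distinct `w, w'` in
the Weyl group, `w(ρ) − w'(ρ) ∉ kΓ`; that is, the points `w · 0 = w(ρ) − ρ` remain
pairwise distinct modulo the lattice `kΓ`. -/
theorem weyl_rho_orbit_distinct_mod_lattice
    (S : RootSystemData E) (k : ℝ) (hk : 2 * ⟪S.ρ, S.θ⟫ < |k|) :
    ∀ w ∈ S.W, ∀ w' ∈ S.W, w ≠ w' →
      ¬ ∃ l ∈ S.coweights, w S.ρ - w' S.ρ = k • l := by
  rintro w hw w' hw' hne ⟨l, hl, heq⟩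
  rcases eq_or_ne l 0 with rfl | hl0
  · refine hne (inv_mul_eq_one.1 (S.eq_one_of_apply_rho_eq (mul_mem (inv_mem hw') hw) ?_)).symm
    rw [smul_zero, sub_eq_zero] at heq
    simp [heq]
  obtain ⟨α, hα, hαl⟩ := S.exists_mem_inner_ne_zero hl0
  obtain ⟨n, hn⟩ := hl α hα
  have hn1 : (1 : ℝ) ≤ |(n : ℝ)| := by
    rw [← Int.cast_abs]
    exact_mod_cast Int.one_le_abs (by rintro rfl; simp [hn] at hαl)
  have hlarge : |k| ≤ |⟪α, w S.ρ - w' S.ρ⟫| := by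
    rw [heq, real_inner_smul_right, hn, abs_mul]
    nlinarith [abs_nonneg k]
  have hsmall : |⟪α, w S.ρ - w' S.ρ⟫| ≤ 2 * ⟪S.ρ, S.θ⟫ := by
    rw [inner_sub_right]
    linarith [abs_sub (⟪α, w S.ρ⟫) (⟪α, w' S.ρ⟫), S.abs_inner_apply_rho_le hw hα,
      S.abs_inner_apply_rho_le hw' hα]
  linarith

end S9
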